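/- For all f, g ∈ Δ_{2,max}, the limits lim_{x→1⁻}[f,g]₂(x) and lim_{x→−1⁺}[f,g]₂(x) exist and are finite. -/

import Mathlib

open MeasureTheory Set Filter

noncomputable section

/-- `f` is locally absolutely continuous on `(-1,1)` with a.e. derivative `f'`,
expressed via the fundamental theorem of calculus. -/
def LocACOn (f f' : ℝ → ℂ) : Prop :=
  ∀ x ∈ Ioo (-1:ℝ) 1, ∀ y ∈ Ioo (-1:ℝ) 1,
    IntervalIntegrable f' volume x y ∧ f y - f x = ∫ t in x..y, f' t

/-- membership in `L²(-1,1)` -/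
def L2I (g : ℝ → ℂ) : Prop :=
  MemLp g 2 (volume.restrict (Ioo (-1:ℝ) 1))

/-- the Legendre expression `ℓ[f] = -((1-x²)f′)′ = -(1-x²)f″ + 2x f′`. -/
def leg (f1 f2 : ℝ → ℂ) (x : ℝ) : ℂ :=
  ((2*x : ℝ) : ℂ) * f1 x - ((1 - x^2 : ℝ) : ℂ) * f2 x

/-- the derivative `(ℓ[f])′ = 2f′ + 4x f″ - (1-x²)f‴`. -/
def legD (f1 f2 f3 : ℝ → ℂ) (x : ℝ) : ℂ :=
  (2 : ℂ) * f1 x + ((4*x : ℝ) : ℂ) * f2 x - ((1 - x^2 : ℝ) : ℂ) * f3 x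

/-- the second derivative `(ℓ[f])″ = 6f″ + 6x f‴ - (1-x²)f⁗`. -/
def legDD (f2 f3 f4 : ℝ → ℂ) (x : ℝ) : ℂ :=
  (6 : ℂ) * f2 x + ((6*x : ℝ) : ℂ) * f3 x - ((1 - x^2 : ℝ) : ℂ) * f4 x

/-- `ℓ²[f] = ((1-x²)²f″)″ - 2((1-x²)f′)′
           = (1-x²)²f⁗ - 8x(1-x²)f‴ + (14x²-6)f″ + 4x f′`. -/
def legSq (f1 f2 f3 f4 : ℝ → ℂ) (x : ℝ) : ℂ :=
  (((1 - x^2)^2 : ℝ) : ℂ) * f4 x - ((8*x*(1 - x^2) : ℝ) : ℂ) * f3 x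
    + ((14*x^2 - 6 : ℝ) : ℂ) * f2 x + ((4*x : ℝ) : ℂ) * f1 x

/-- `((1-x²)²f″)′ = (1-x²)²f‴ - 4x(1-x²)f″`. -/
def sqTermD (f2 f3 : ℝ → ℂ) (x : ℝ) : ℂ :=
  (((1 - x^2)^2 : ℝ) : ℂ) * f3 x - ((4*x*(1 - x^2) : ℝ) : ℂ) * f2 x

/-- `[f,1]₂(x) = ((1-x²)²f″)′ - 2(1-x²)f′`. -/
def bket1 (f1 f2 f3 : ℝ → ℂ) (x : ℝ) : ℂ :=
  sqTermD f2 f3 x - ((2*(1 - x^2) : ℝ) : ℂ) * f1 x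

/-- `[f,x]₂(x) = x[f,1]₂(x) - (1-x²)²f″ + 2(1-x²)f`. -/
def bketX (f f1 f2 f3 : ℝ → ℂ) (x : ℝ) : ℂ :=
  (x : ℂ) * bket1 f1 f2 f3 x - (((1 - x^2)^2 : ℝ) : ℂ) * f2 x
    + ((2*(1 - x^2) : ℝ) : ℂ) * f x

/-- the maximal domain `Δ_{2,max}` of `ℓ²` in `L²(-1,1)`:
`f, f′, f″, f‴` locally absolutely continuous and `f, ℓ²[f] ∈ L²(-1,1)`. -/
def Delta2Max (f f1 f2 f3 f4 : ℝ → ℂ) : Prop :=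
  LocACOn f f1 ∧ LocACOn f1 f2 ∧ LocACOn f2 f3 ∧ LocACOn f3 f4 ∧
    L2I f ∧ L2I (legSq f1 f2 f3 f4)

/-- the filter `x → 1⁻` from within `(-1,1)`. -/
def atOne : Filter ℝ := nhdsWithin 1 (Ioo (-1:ℝ) 1)

/-- the filter `x → -1⁺` from within `(-1,1)`. -/
def atNegOne : Filter ℝ := nhdsWithin (-1) (Ioo (-1:ℝ) 1)

/-- the GKN domain `D(S)`. -/
def DS (f f1 f2 f3 f4 : ℝ → ℂ) : Prop :=
  Delta2Max f f1 f2 f3 f4 ∧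
  Tendsto (bket1 f1 f2 f3) atOne (nhds 0) ∧
  Tendsto (bket1 f1 f2 f3) atNegOne (nhds 0) ∧
  Tendsto (bketX f f1 f2 f3) atOne (nhds 0) ∧
  Tendsto (bketX f f1 f2 f3) atNegOne (nhds 0)

/-- the maximal domain `Δ_{1,max}` of `ℓ` in `L²(-1,1)`. -/
def Delta1Max (f f1 f2 : ℝ → ℂ) : Prop :=
  LocACOn f f1 ∧ LocACOn f1 f2 ∧ L2I f ∧ L2I (leg f1 f2)

/-- the domain `D(A)` of the Legendre polynomials operator. -/
def DA (f f1 f2 : ℝ → ℂ) : Prop :=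
  Delta1Max f f1 f2 ∧
  Tendsto (fun x => ((1 - x^2 : ℝ) : ℂ) * f1 x) atOne (nhds 0) ∧
  Tendsto (fun x => ((1 - x^2 : ℝ) : ℂ) * f1 x) atNegOne (nhds 0)

/-- the algebraic domain `D(A²) = {f ∈ D(A) : ℓ[f] ∈ D(A)}`. -/
def DA2 (f f1 f2 f3 f4 : ℝ → ℂ) : Prop :=
  DA f f1 f2 ∧ DA (leg f1 f2) (legD f1 f2 f3) (legDD f2 f3 f4)

/-- the full sesquilinear form `[f,g]₂(x)` associated with `ℓ²` via Green's formula: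
`[f,g]₂ = ((1-x²)²f″)′ ḡ − ((1-x²)²ḡ″)′ f − (1-x²)²f″ḡ′ + (1-x²)²f′ḡ″ − 2(1-x²)f′ḡ + 2(1-x²)fḡ′`. -/
def bket2 (f f1 f2 f3 g g1 g2 g3 : ℝ → ℂ) (x : ℝ) : ℂ :=
  sqTermD f2 f3 x * star (g x) - star (sqTermD g2 g3 x) * f x
    - (((1 - x^2)^2 : ℝ) : ℂ) * f2 x * star (g1 x)
    + (((1 - x^2)^2 : ℝ) : ℂ) * f1 x * star (g2 x)
    - ((2*(1 - x^2) : ℝ) : ℂ) * f1 x * star (g x)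
    + ((2*(1 - x^2) : ℝ) : ℂ) * f x * star (g1 x)


/-!
By Green's formula, `[f,g]₂` is locally absolutely continuous on `(-1,1)` with derivative
`ℓ²[f] ḡ - f ℓ²[g]‾`, which is integrable on `(-1,1)` because `f, g, ℓ²[f], ℓ²[g] ∈ L²`. So
`[f,g]₂` is a constant plus the primitive of an integrable function and extends continuously to
`[-1,1]`. The product rule behind Green's formula holds for locally absolutely continuous
functions: by Lebesgue's differentiation theorem `UV - ∫ (U′V + UV′)` has derivative zero a.e.,
and an absolutely continuous function with this property is constant.
-/

open scoped Topology

theorem AbsolutelyContinuousOnInterval.congr {X : Type*} [PseudoMetricSpace X] {f g : ℝ → X}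
    {a b : ℝ} (hf : AbsolutelyContinuousOnInterval f a b) (h : EqOn f g (uIcc a b)) :
    AbsolutelyContinuousOnInterval g a b := by
  refine Tendsto.congr' (eventually_inf_principal.2 (Eventually.of_forall fun E hE => ?_)) hf
  exact Finset.sum_congr rfl fun i hi => by rw [h (hE.1 i hi).1, h (hE.1 i hi).2]

theorem absolutelyContinuousOnInterval_of_re_im {F : ℝ → ℂ} {a b : ℝ}
    (hre : AbsolutelyContinuousOnInterval (fun t => (F t).re) a b)
    (him : AbsolutelyContinuousOnInterval (fun t => (F t).im) a b) :
    AbsolutelyContinuousOnInterval F a b := by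
  have hsum := Filter.Tendsto.add hre him
  rw [add_zero] at hsum
  refine squeeze_zero (fun _ => Finset.sum_nonneg fun _ _ => dist_nonneg) (fun E => ?_) hsum
  rw [← Finset.sum_add_distrib]
  gcongr with i
  rw [Complex.dist_eq, Real.dist_eq, Real.dist_eq, ← Complex.sub_re, ← Complex.sub_im]
  exact Complex.norm_le_abs_re_add_abs_im _

theorem IntervalIntegrable.absolutelyContinuousOnInterval_primitive {φ : ℝ → ℂ} {a b c : ℝ}
    (hφ : IntervalIntegrable φ volume a b) (hc : c ∈ uIcc a b) :
    AbsolutelyContinuousOnInterval (fun t => ∫ s in c..t, φ s) a b := by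
  have hφ' (t : ℝ) (ht : t ∈ uIcc a b) : IntervalIntegrable φ volume c t :=
    hφ.mono_set (uIcc_subset_uIcc hc ht)
  apply absolutelyContinuousOnInterval_of_re_im
  · exact (IntervalIntegrable.absolutelyContinuousOnInterval_intervalIntegral
      (f := fun t => (φ t).re) ⟨hφ.1.re, hφ.2.re⟩ hc).congr
      fun t ht => intervalIntegral.intervalIntegral_re (hφ' t ht)
  · exact (IntervalIntegrable.absolutelyContinuousOnInterval_intervalIntegral
      (f := fun t => (φ t).im) ⟨hφ.1.im, hφ.2.im⟩ hc).congr
      fun t ht => intervalIntegral.intervalIntegral_im (hφ' t ht)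

theorem integral_deriv_mul_eq_sub_of_primitive {φ ψ : ℝ → ℂ} {a b : ℝ}
    (hφ : IntervalIntegrable φ volume a b) (hψ : IntervalIntegrable ψ volume a b) (c d : ℂ) :
    ∫ t in a..b, (φ t * (d + ∫ s in a..t, ψ s) + (c + ∫ s in a..t, φ s) * ψ t)
      = (c + ∫ s in a..b, φ s) * (d + ∫ s in a..b, ψ s) - c * d := by
  set U : ℝ → ℂ := fun t => c + ∫ s in a..t, φ s
  set V : ℝ → ℂ := fun t => d + ∫ s in a..t, ψ s
  have hconst (e : ℂ) : AbsolutelyContinuousOnInterval (fun _ => e) a b :=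
    (LipschitzWith.const e).lipschitzOnWith.absolutelyContinuousOnInterval
  have hU : AbsolutelyContinuousOnInterval U a b :=
    (hconst c).add (hφ.absolutelyContinuousOnInterval_primitive left_mem_uIcc)
  have hV : AbsolutelyContinuousOnInterval V a b :=
    (hconst d).add (hψ.absolutelyContinuousOnInterval_primitive left_mem_uIcc)
  have hW : IntervalIntegrable (fun t => φ t * V t + U t * ψ t) volume a b :=
    (hφ.mul_continuousOn hV.continuousOn).add (hψ.continuousOn_mul hU.continuousOn)
  set P : ℝ → ℂ := fun t => U t * V t - ∫ s in a..t, (φ s * V s + U s * ψ s)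
  have hP : AbsolutelyContinuousOnInterval P a b :=
    (hU.fun_smul hV).sub (hW.absolutelyContinuousOnInterval_primitive left_mem_uIcc)
  -- By Lebesgue's differentiation theorem, `P` has derivative `0` almost everywhere.
  obtain ⟨C, hC⟩ := hP.const_of_ae_hasDerivAt_zero (by
    filter_upwards [hφ.ae_hasDerivAt_integral, hψ.ae_hasDerivAt_integral,
      hW.ae_hasDerivAt_integral] with t hφt hψt hWt ht
    have := (((hφt ht a left_mem_uIcc).const_add c).fun_mul
      ((hψt ht a left_mem_uIcc).const_add d)).fun_sub (hWt ht a left_mem_uIcc)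
    rwa [sub_self] at this)
  have hPab := (hC b right_mem_uIcc).trans (hC a left_mem_uIcc).symm
  simp only [P, U, V, intervalIntegral.integral_same, add_zero, sub_zero] at hPab
  linear_combination -hPab

namespace LocACOn

variable {u u' v v' : ℝ → ℂ} {x y : ℝ}

theorem eqOn_primitive (h : LocACOn u u') (hx : x ∈ Ioo (-1 : ℝ) 1) (hy : y ∈ Ioo (-1 : ℝ) 1) :
    EqOn u (fun t => u x + ∫ s in x..t, u' s) (uIcc x y) := fun t ht => by
  dsimp only
  rw [← (h x hx t (ordConnected_Ioo.uIcc_subset hx hy ht)).2]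
  ring

theorem continuousOn_uIcc (h : LocACOn u u') (hx : x ∈ Ioo (-1 : ℝ) 1)
    (hy : y ∈ Ioo (-1 : ℝ) 1) : ContinuousOn u (uIcc x y) :=
  (continuousOn_const.add (intervalIntegral.continuousOn_primitive_interval' (h x hx y hy).1
    left_mem_uIcc)).congr (h.eqOn_primitive hx hy)

theorem mul (hu : LocACOn u u') (hv : LocACOn v v') :
    LocACOn (fun x => u x * v x) (fun x => u' x * v x + u x * v' x) := by
  intro x hx y hy
  have hU := hu.eqOn_primitive hx hy
  have hV := hv.eqOn_primitive hx hy
  refine ⟨((hu x hx y hy).1.mul_continuousOn (hv.continuousOn_uIcc hx hy)).add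
    ((hv x hx y hy).1.continuousOn_mul (hu.continuousOn_uIcc hx hy)), ?_⟩
  dsimp only
  rw [hU right_mem_uIcc, hV right_mem_uIcc,
    ← integral_deriv_mul_eq_sub_of_primitive (hu x hx y hy).1 (hv x hx y hy).1]
  exact intervalIntegral.integral_congr fun t ht => by simp only [hU ht, hV ht]

theorem add (hu : LocACOn u u') (hv : LocACOn v v') :
    LocACOn (fun x => u x + v x) (fun x => u' x + v' x) := by
  intro x hx y hy
  obtain ⟨hu'i, hue⟩ := hu x hx y hy
  obtain ⟨hv'i, hve⟩ := hv x hx y hy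
  refine ⟨hu'i.add hv'i, ?_⟩
  rw [intervalIntegral.integral_add hu'i hv'i, ← hue, ← hve]
  ring

theorem sub (hu : LocACOn u u') (hv : LocACOn v v') :
    LocACOn (fun x => u x - v x) (fun x => u' x - v' x) := by
  intro x hx y hy
  obtain ⟨hu'i, hue⟩ := hu x hx y hy
  obtain ⟨hv'i, hve⟩ := hv x hx y hy
  refine ⟨hu'i.sub hv'i, ?_⟩
  rw [intervalIntegral.integral_sub hu'i hv'i, ← hue, ← hve]
  ring

theorem star (h : LocACOn u u') : LocACOn (fun x => star (u x)) (fun x => star (u' x)) := by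
  intro x hx y hy
  obtain ⟨hu'i, hue⟩ := h x hx y hy
  have hconj {μ : Measure ℝ} (hi : Integrable u' μ) : Integrable (Star.star u') μ :=
    memLp_one_iff_integrable.1 (memLp_one_iff_integrable.2 hi).star
  refine ⟨⟨hconj hu'i.1, hconj hu'i.2⟩, ?_⟩
  rw [← star_sub, hue]
  exact intervalIntegral.intervalIntegral_conj.symm

theorem congr (h : LocACOn u u') (huv : u = v) (hu'v' : u' = v') : LocACOn v v' :=
  huv ▸ hu'v' ▸ h

end LocACOn

theorem locACOn_ofReal {p p' : ℝ → ℝ} (hp : ∀ x, HasDerivAt p (p' x) x) (hp' : Continuous p') :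
    LocACOn (fun x => (p x : ℂ)) (fun x => (p' x : ℂ)) := fun x _ y _ =>
  have hi := (Complex.continuous_ofReal.comp hp').intervalIntegrable x y
  ⟨hi, (intervalIntegral.integral_eq_sub_of_hasDerivAt (fun t _ => (hp t).ofReal_comp) hi).symm⟩

theorem locACOn_bket2 {f f1 f2 f3 f4 g g1 g2 g3 g4 : ℝ → ℂ}
    (hf : Delta2Max f f1 f2 f3 f4) (hg : Delta2Max g g1 g2 g3 g4) :
    LocACOn (bket2 f f1 f2 f3 g g1 g2 g3)
      (fun x => legSq f1 f2 f3 f4 x * star (g x) - f x * star (legSq g1 g2 g3 g4 x)) := by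
  obtain ⟨hf0, hf1, hf2, hf3, -, -⟩ := hf
  obtain ⟨hg0, hg1, hg2, hg3, -, -⟩ := hg
  have hp2 := locACOn_ofReal (p := fun x => (1 - x ^ 2) ^ 2) (p' := fun x => -(4 * x * (1 - x ^ 2)))
    (fun x => ((((hasDerivAt_id' x).fun_pow 2).const_sub 1).fun_pow 2).congr_deriv (by ring))
    (by fun_prop)
  have hp4 := locACOn_ofReal (p := fun x => 4 * x * (1 - x ^ 2)) (p' := fun x => 4 - 12 * x ^ 2)
    (fun x => (((hasDerivAt_id' x).const_mul 4).mul
      (((hasDerivAt_id' x).fun_pow 2).const_sub 1)).congr_deriv (by ring))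
    (by fun_prop)
  have hp1 := locACOn_ofReal (p := fun x => 2 * (1 - x ^ 2)) (p' := fun x => -(4 * x))
    (fun x => ((((hasDerivAt_id' x).fun_pow 2).const_sub 1).const_mul 2).congr_deriv (by ring))
    (by fun_prop)
  refine (((((((hp2.mul hf3).sub (hp4.mul hf2)).mul hg0.star).sub
      ((((hp2.mul hg3).sub (hp4.mul hg2)).star).mul hf0)).sub
      ((hp2.mul hf2).mul hg1.star)).add ((hp2.mul hf1).mul hg2.star)).sub
      ((hp1.mul hf1).mul hg0.star)).add ((hp1.mul hf0).mul hg1.star) |>.congr ?_ ?_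
  · funext x
    simp only [bket2, sqTermD, star_sub, star_mul', RCLike.star_def, Complex.conj_ofReal]
  · funext x
    simp only [legSq, star_sub, star_add, star_mul', RCLike.star_def, Complex.conj_ofReal]
    push_cast
    ring

theorem L2I.integrableOn_mul_star {u v : ℝ → ℂ} (hu : L2I u) (hv : L2I v) :
    IntegrableOn (fun x => u x * star (v x)) (Ioo (-1 : ℝ) 1) :=
  hu.integrable_mul hv.star

theorem LocACOn.tendsto_nhdsWithin {F F' : ℝ → ℂ} (hF : LocACOn F F')
    (hF' : IntegrableOn F' (Ioo (-1 : ℝ) 1)) {c : ℝ} (hc : c ∈ Icc (-1 : ℝ) 1) :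
    Tendsto F (𝓝[Ioo (-1 : ℝ) 1] c) (𝓝 (F 0 + ∫ t in (0 : ℝ)..c, F' t)) := by
  have h01 : (-1 : ℝ) ≤ 1 := by norm_num
  have hI : IntervalIntegrable F' volume (-1) 1 :=
    (intervalIntegrable_iff_integrableOn_Ioo_of_le h01).2 hF'
  have hprim := intervalIntegral.continuousOn_primitive_interval' hI
    (by rw [uIcc_of_le h01]; norm_num : (0 : ℝ) ∈ uIcc (-1) 1)
  rw [uIcc_of_le h01] at hprim
  refine (tendsto_const_nhds.add ((hprim c hc).mono_left
    (nhdsWithin_mono c Ioo_subset_Icc_self))).congr' ?_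
  filter_upwards [self_mem_nhdsWithin] with r hr
  rw [← (hF 0 (by norm_num) r hr).2]
  ring

theorem bket2_limits_exist (f f1 f2 f3 f4 g g1 g2 g3 g4 : ℝ → ℂ)
    (hf : Delta2Max f f1 f2 f3 f4) (hg : Delta2Max g g1 g2 g3 g4) :
    (∃ L : ℂ, Tendsto (bket2 f f1 f2 f3 g g1 g2 g3) atOne (nhds L)) ∧
    (∃ L : ℂ, Tendsto (bket2 f f1 f2 f3 g g1 g2 g3) atNegOne (nhds L)) := by
  have hGreen := locACOn_bket2 hf hg
  obtain ⟨-, -, -, -, hfL2, hℓfL2⟩ := hf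
  obtain ⟨-, -, -, -, hgL2, hℓgL2⟩ := hg
  have hint : IntegrableOn
      (fun x => legSq f1 f2 f3 f4 x * star (g x) - f x * star (legSq g1 g2 g3 g4 x))
      (Ioo (-1 : ℝ) 1) :=
    (hℓfL2.integrableOn_mul_star hgL2).sub (hfL2.integrableOn_mul_star hℓgL2)
  have hlim (c : ℝ) (hc : c ∈ Icc (-1 : ℝ) 1) := hGreen.tendsto_nhdsWithin hint hc
  exact ⟨⟨_, hlim 1 (by norm_num)⟩, ⟨_, hlim (-1) (by norm_num)⟩⟩
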